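/- Let p be a prime. Then for every integer n ≥ 1 and all integers m ≥ 0 and r ≥ 1, N_r(m,n) ≤ n · 4^n · e^{2πn/√3}; in particular N(m,n) ≤ n · 4^n · e^{2πn/√3} for all m ≥ 0. -/

import Mathlib

/-!
Put `c₀ = b₁` and `cᵢ = aᵢ + bᵢ₊₁`. A solution is then a representation `m = ∑ cᵢ pⁱ` with
`∑ cᵢ ≤ n`, together with the set `{b = 1}`, which lies in the support of `c`. The carries `eᵢ`
of this base-`p` sum satisfy `cᵢ + eᵢ = dᵢ + p eᵢ₊₁`, where the `dᵢ` are the digits of `m`; so `c`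
is determined by `e`, and `∑ d + ∑ e ≤ ∑ c ≤ n`. Every maximal block of nonzero carries ends at a
nonzero digit of `m`, so `e` is determined by the block lengths, indexed by the nonzero digits,
and by its values on its support. Recording each of these, and `{b = 1}` inside the support of
`c`, by the set of its partial sums gives three subsets of `{1, …, n}`. Hence `N_r(m,n) ≤ 8ⁿ`.
-/

/-- The set `S_r(m,n)` of solutions of the linear system, encoded as pairs of
finitely supported sequences `(a, b) : (ℕ → ℕ) × (ℕ → ℕ)` where index `i`
(for `0 ≤ i < r`) corresponds to `a_{i+1}`, `b_{i+1}`. -/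
def SolSet (p r m n : ℕ) : Set ((ℕ → ℕ) × (ℕ → ℕ)) :=
  {ab | (∀ i, r ≤ i → ab.1 i = 0) ∧ (∀ i, r ≤ i → ab.2 i = 0) ∧
        (∀ i, ab.2 i ≤ 1) ∧
        2 * (∑ i ∈ Finset.range r, ab.1 i) + ∑ i ∈ Finset.range r, ab.2 i = n ∧
        ab.2 0 + ∑ i ∈ Finset.range r, (ab.1 i + ab.2 (i + 1)) * p ^ (i + 1) = m}

/-- `N_r(m,n)`, the number of solutions of the linear system. -/
noncomputable def Ncard (p r m n : ℕ) : ℕ := Nat.card (SolSet p r m n)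

/-- The stable value `N(m,n)` (for `p ≥ 2` one has `p ^ (m+1) > m`, so `r = m + 1`
is in the stable range), with the convention that it vanishes for negative arguments. -/
noncomputable def Nstab (p : ℕ) (m n : ℤ) : ℕ :=
  if 0 ≤ m ∧ 0 ≤ n then Ncard p (m.toNat + 1) m.toNat n.toNat else 0

open Finset

section PartialSum

variable {α : Type*} [LinearOrder α] {s : Finset α} {f g : α → ℕ}

theorem StrictMonoOn.card_filter_image_lt {β : Type*} [LinearOrder β] {φ : α → β}
    (hφ : StrictMonoOn φ s) {a : α} (ha : a ∈ s) :
    #{y ∈ s.image φ | y < φ a} = #{x ∈ s | x < a} := by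
  have himage : {y ∈ s.image φ | y < φ a} = {x ∈ s | x < a}.image φ := by
    ext y
    simp only [mem_filter, mem_image]
    constructor
    · rintro ⟨⟨x, hx, rfl⟩, hlt⟩
      exact ⟨x, ⟨hx, (hφ.lt_iff_lt hx ha).1 hlt⟩, rfl⟩
    · rintro ⟨x, ⟨hx, hlt⟩, rfl⟩
      exact ⟨⟨x, hx, rfl⟩, hφ hx ha hlt⟩
  rw [himage, card_image_of_injOn (hφ.injOn.mono (coe_subset.2 (filter_subset _ _)))]

theorem StrictMonoOn.eqOn_of_image_eq {β : Type*} [LinearOrder β] {φ ψ : α → β}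
    (hφ : StrictMonoOn φ s) (hψ : StrictMonoOn ψ s) (h : s.image φ = s.image ψ) :
    Set.EqOn φ ψ s := by
  have not_lt_of_image_eq : ∀ {φ ψ : α → β}, StrictMonoOn φ s → StrictMonoOn ψ s →
      s.image φ = s.image ψ → ∀ a ∈ s, ¬ φ a < ψ a := by
    intro φ ψ hφ hψ h a ha hlt
    have hmem : φ a ∈ s.image ψ := h ▸ mem_image_of_mem φ ha
    have hcard : #{y ∈ s.image ψ | y < φ a} < #{y ∈ s.image ψ | y < ψ a} := by
      refine card_lt_card ((ssubset_iff_of_subset ?_).2 ⟨φ a, ?_, ?_⟩)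
      · intro y hy
        simp only [mem_filter] at hy ⊢
        exact ⟨hy.1, hy.2.trans hlt⟩
      · exact mem_filter.2 ⟨hmem, hlt⟩
      · simp
    rw [← h, hφ.card_filter_image_lt ha, h, hψ.card_filter_image_lt ha] at hcard
    exact hcard.false
  intro a ha
  exact le_antisymm (not_lt.1 (not_lt_of_image_eq hψ hφ h.symm a ha))
    (not_lt.1 (not_lt_of_image_eq hφ hψ h a ha))

def partialSum (s : Finset α) (f : α → ℕ) (t : α) : ℕ := ∑ x ∈ s with x ≤ t, f x

theorem partialSum_strictMonoOn (hf : ∀ x ∈ s, 0 < f x) : StrictMonoOn (partialSum s f) s := by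
  intro a ha b hb hab
  refine sum_lt_sum_of_subset (fun x hx => ?_) (mem_filter.2 ⟨hb, le_rfl⟩) (by simp [hab])
    (hf b hb) fun _ _ _ => Nat.zero_le _
  simp only [mem_filter] at hx ⊢
  exact ⟨hx.1, hx.2.trans hab.le⟩

theorem image_partialSum_subset (hf : ∀ x ∈ s, 0 < f x) :
    s.image (partialSum s f) ⊆ Icc 1 (∑ x ∈ s, f x) := by
  intro y hy
  obtain ⟨t, ht, rfl⟩ := mem_image.1 hy
  refine mem_Icc.2 ⟨(hf t ht).trans_le ?_, sum_le_sum_of_subset (filter_subset _ _)⟩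
  exact single_le_sum (fun _ _ => Nat.zero_le _) (mem_filter.2 ⟨ht, le_rfl⟩)

theorem eqOn_of_eqOn_partialSum (h : Set.EqOn (partialSum s f) (partialSum s g) s) :
    Set.EqOn f g s := by
  induction s using Finset.induction_on_max with
  | empty => simp
  | insert a s hlt ih =>
    have hbelow : ∀ t ∈ s, ∀ k : α → ℕ, partialSum (insert a s) k t = partialSum s k t := by
      intro t ht k
      rw [partialSum, filter_insert, if_neg (hlt t ht).not_ge, partialSum]
    have htop : ∀ k : α → ℕ, partialSum (insert a s) k a = k a + ∑ x ∈ s, k x := by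
      intro k
      rw [partialSum, filter_insert, if_pos le_rfl, filter_true_of_mem fun x hx => (hlt x hx).le,
        sum_insert (fun has => (hlt a has).false)]
    have hs : Set.EqOn f g s := ih fun t ht => by
      simpa only [hbelow t ht] using h (mem_insert_of_mem ht)
    intro t ht
    rcases mem_insert.1 ht with rfl | ht
    · have := h (mem_insert_self t s)
      rw [htop, htop, sum_congr rfl hs] at this
      exact Nat.add_right_cancel this
    · exact hs ht

theorem eqOn_of_image_partialSum_eq (hf : ∀ x ∈ s, 0 < f x) (hg : ∀ x ∈ s, 0 < g x)
    (h : s.image (partialSum s f) = s.image (partialSum s g)) : Set.EqOn f g s :=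
  eqOn_of_eqOn_partialSum <|
    (partialSum_strictMonoOn hf).eqOn_of_image_eq (partialSum_strictMonoOn hg) h

theorem image_partialSum_one_subset {u : Finset α} (hu : u ⊆ s) :
    u.image (partialSum s 1) ⊆ Icc 1 #s := by
  refine (image_subset_image hu).trans ((image_partialSum_subset fun _ _ => Nat.one_pos).trans ?_)
  simp

theorem eq_of_image_partialSum_one_eq {u v : Finset α} (hu : u ⊆ s) (hv : v ⊆ s)
    (h : u.image (partialSum s 1) = v.image (partialSum s 1)) : u = v := by
  have hinj := (partialSum_strictMonoOn (s := s) (f := 1) fun _ _ => Nat.one_pos).injOn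
  rw [← coe_inj, coe_image, coe_image] at h
  exact coe_injective ((hinj.image_eq_image_iff (coe_subset.2 hu) (coe_subset.2 hv)).1 h)

end PartialSum

section Blocks

def topBlock (e : ℕ → ℕ) (t : ℕ) : Finset ℕ :=
  {i ∈ range (t + 1) | e (t + 1) = 0 ∧ ∀ j ∈ Icc i t, e j ≠ 0}

theorem eq_Icc_of_Icc_subset {s : Finset ℕ} {t : ℕ} (hst : ∀ i ∈ s, i ≤ t)
    (hs : ∀ i ∈ s, Icc i t ⊆ s) : s = Icc (t + 1 - #s) t := by
  rcases s.eq_empty_or_nonempty with rfl | hne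
  · simp
  set a := s.min' hne
  have hsa : s = Icc a t := by
    ext x
    exact ⟨fun hx => mem_Icc.2 ⟨min'_le s x hx, hst x hx⟩, fun hx => hs a (min'_mem s hne) hx⟩
  have hat : a ≤ t := hst a (min'_mem s hne)
  calc s = Icc a t := hsa
    _ = Icc (t + 1 - #s) t := by rw [hsa, Nat.card_Icc]; congr 1; omega

theorem topBlock_eq_Icc (e : ℕ → ℕ) (t : ℕ) : topBlock e t = Icc (t + 1 - #(topBlock e t)) t := by
  refine eq_Icc_of_Icc_subset (fun i hi => ?_) fun i hi j hj => ?_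
  · simp only [topBlock, mem_filter, mem_range] at hi
    omega
  · simp only [topBlock, mem_filter, mem_range, mem_Icc] at hi hj ⊢
    exact ⟨by omega, hi.2.1, fun k hk => hi.2.2 k ⟨by omega, hk.2⟩⟩

theorem pairwiseDisjoint_topBlock (e : ℕ → ℕ) (s : Set ℕ) : s.PairwiseDisjoint (topBlock e) := by
  intro t ht t' ht' hne
  wlog hlt : t < t' generalizing t t'
  · exact (this ht' ht hne.symm (lt_of_le_of_ne (not_lt.1 hlt) hne.symm)).symm
  refine disjoint_left.2 fun i hi hi' => ?_
  simp only [topBlock, mem_filter, mem_range, mem_Icc] at hi hi'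
  exact hi'.2.2 (t + 1) ⟨by omega, hlt⟩ hi.2.1

structure BlocksEndIn (K : ℕ) (Z : Finset ℕ) (e : ℕ → ℕ) : Prop where
  eq_zero : ∀ i, K ≤ i → e i = 0
  mem_of_top : ∀ i, e i ≠ 0 → e (i + 1) = 0 → i ∈ Z

namespace BlocksEndIn

variable {K : ℕ} {Z : Finset ℕ} {e e' : ℕ → ℕ}

theorem lt_of_ne_zero (h : BlocksEndIn K Z e) {i : ℕ} (hi : e i ≠ 0) : i < K := by
  by_contra hK
  exact hi (h.eq_zero i (not_lt.1 hK))

theorem exists_mem_topBlock (h : BlocksEndIn K Z e) (i : ℕ) (hi : e i ≠ 0) :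
    ∃ z ∈ Z, i ∈ topBlock e z := by
  by_cases hnext : e (i + 1) = 0
  · refine ⟨i, h.mem_of_top i hi hnext, ?_⟩
    simp only [topBlock, mem_filter, mem_range, mem_Icc]
    exact ⟨Nat.lt_succ_self i, hnext, fun j hj => le_antisymm hj.2 hj.1 ▸ hi⟩
  · have hiK := h.lt_of_ne_zero hi
    obtain ⟨z, hz, hiz⟩ := h.exists_mem_topBlock (i + 1) hnext
    simp only [topBlock, mem_filter, mem_range, mem_Icc] at hiz
    refine ⟨z, hz, ?_⟩
    simp only [topBlock, mem_filter, mem_range, mem_Icc]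
    refine ⟨by omega, hiz.2.1, fun j hj => ?_⟩
    rcases hj.1.eq_or_lt with rfl | hlt
    · exact hi
    · exact hiz.2.2 j ⟨hlt, hj.2⟩
termination_by K - i

theorem filter_ne_zero_eq_biUnion (h : BlocksEndIn K Z e) :
    {i ∈ range K | e i ≠ 0} = Z.biUnion (topBlock e) := by
  ext i
  simp only [mem_filter, mem_range, mem_biUnion]
  constructor
  · exact fun hi => h.exists_mem_topBlock i hi.2
  · rintro ⟨z, -, hiz⟩
    simp only [topBlock, mem_filter, mem_range, mem_Icc] at hiz
    have hi : e i ≠ 0 := hiz.2.2 i ⟨le_rfl, by omega⟩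
    exact ⟨h.lt_of_ne_zero hi, hi⟩

end BlocksEndIn

-- The `+ 1` keeps the summands positive, so that empty blocks are recorded as well.
def blockCode (Z : Finset ℕ) (e : ℕ → ℕ) : Finset ℕ :=
  Z.image (partialSum Z fun z => #(topBlock e z) + 1)

def valueCode (K : ℕ) (e : ℕ → ℕ) : Finset ℕ :=
  {i ∈ range K | e i ≠ 0}.image (partialSum {i ∈ range K | e i ≠ 0} e)

variable {K : ℕ} {Z : Finset ℕ} {e e' : ℕ → ℕ}

theorem BlocksEndIn.blockCode_subset (h : BlocksEndIn K Z e) :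
    blockCode Z e ⊆ Icc 1 (#Z + #{i ∈ range K | e i ≠ 0}) := by
  have hcard : #{i ∈ range K | e i ≠ 0} = ∑ z ∈ Z, #(topBlock e z) := by
    rw [h.filter_ne_zero_eq_biUnion, card_biUnion (pairwiseDisjoint_topBlock e _)]
  refine (image_partialSum_subset (f := fun z => #(topBlock e z) + 1)
    fun _ _ => Nat.succ_pos _).trans_eq ?_
  rw [sum_add_distrib, hcard, ← card_eq_sum_ones, add_comm]

theorem valueCode_subset : valueCode K e ⊆ Icc 1 (∑ i ∈ range K, e i) := by
  refine (image_partialSum_subset fun i hi => ?_).trans_eq ?_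
  · exact Nat.pos_of_ne_zero (mem_filter.1 hi).2
  · rw [sum_filter_ne_zero]

theorem BlocksEndIn.eq_of_codes_eq (h : BlocksEndIn K Z e) (h' : BlocksEndIn K Z e')
    (hb : blockCode Z e = blockCode Z e') (hv : valueCode K e = valueCode K e') : e = e' := by
  have hlen : ∀ z ∈ Z, #(topBlock e z) = #(topBlock e' z) := fun z hz =>
    Nat.succ_injective (eqOn_of_image_partialSum_eq (fun _ _ => Nat.succ_pos _)
      (fun _ _ => Nat.succ_pos _) hb hz)
  have hsupp : {i ∈ range K | e i ≠ 0} = {i ∈ range K | e' i ≠ 0} := by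
    rw [h.filter_ne_zero_eq_biUnion, h'.filter_ne_zero_eq_biUnion]
    refine biUnion_congr rfl fun z hz => ?_
    rw [topBlock_eq_Icc e z, topBlock_eq_Icc e' z, hlen z hz]
  funext i
  by_cases hi : i ∈ {i ∈ range K | e i ≠ 0}
  · have hpos : ∀ (k : ℕ → ℕ), ∀ x ∈ {i ∈ range K | k i ≠ 0}, 0 < k x :=
      fun k x hx => Nat.pos_of_ne_zero (mem_filter.1 hx).2
    rw [valueCode, valueCode, ← hsupp] at hv
    exact eqOn_of_image_partialSum_eq (hpos e) (fun x hx => hpos e' x (hsupp ▸ hx)) hv hi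
  · have hi' := hsupp ▸ hi
    simp only [mem_filter, mem_range, not_and, not_not] at hi hi'
    by_cases hiK : i < K
    · rw [hi hiK, hi' hiK]
    · rw [h.eq_zero i (not_lt.1 hiK), h'.eq_zero i (not_lt.1 hiK)]

end Blocks

section Carry

def carry (p : ℕ) (c : ℕ → ℕ) (i : ℕ) : ℕ := (∑ j ∈ range i, c j * p ^ j) / p ^ i

theorem carry_zero (p : ℕ) (c : ℕ → ℕ) : carry p c 0 = 0 := by simp [carry]

theorem sum_range_mul_pow_modEq (p : ℕ) (c : ℕ → ℕ) {i N : ℕ} (h : i ≤ N) :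
    ∑ j ∈ range N, c j * p ^ j ≡ ∑ j ∈ range i, c j * p ^ j [MOD p ^ i] := by
  induction N, h using Nat.le_induction with
  | base => rfl
  | succ N hN ih =>
    rw [sum_range_succ, ← add_zero (∑ j ∈ range i, c j * p ^ j)]
    exact ih.add (Nat.modEq_zero_iff_dvd.2 (dvd_mul_of_dvd_right (pow_dvd_pow p hN) _))

structure IsBaseRep (p K m : ℕ) (c : ℕ → ℕ) : Prop where
  eq_zero : ∀ i, K ≤ i → c i = 0
  sum_eq : ∑ i ∈ range K, c i * p ^ i = m
  lt_pow : m < p ^ K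

namespace IsBaseRep

variable {p K m : ℕ} {c c' : ℕ → ℕ}

theorem sum_range_eq (h : IsBaseRep p K m c) {N : ℕ} (hN : K ≤ N) :
    ∑ j ∈ range N, c j * p ^ j = m := by
  rw [← h.sum_eq]
  refine (sum_subset (range_subset_range.2 hN) fun j _ hj => ?_).symm
  rw [h.eq_zero j (not_lt.1 (mem_range.not.1 hj)), zero_mul]

theorem add_carry (h : IsBaseRep p K m c) (hp : 0 < p) (i : ℕ) :
    c i + carry p c i = m / p ^ i % p + p * carry p c (i + 1) := by
  set S := ∑ j ∈ range (i + 1), c j * p ^ j with hSdef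
  have hpi : 0 < p ^ i := pow_pos hp i
  have hS : S / p ^ i = carry p c i + c i := by
    rw [hSdef, sum_range_succ, Nat.add_mul_div_right _ _ hpi, carry]
  have hnext : carry p c (i + 1) = S / p ^ i / p := by
    rw [carry, Nat.div_div_eq_div_mul, pow_succ]
  have hdigit : S / p ^ i % p = m / p ^ i % p := by
    have hmod : S ≡ m [MOD p ^ i * p] := by
      rw [← pow_succ, ← h.sum_range_eq (le_max_right (i + 1) K)]
      exact (sum_range_mul_pow_modEq p c (le_max_left _ _)).symm
    rw [← Nat.mod_mul_right_div_self, ← Nat.mod_mul_right_div_self m, hmod]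
  have := Nat.div_add_mod (S / p ^ i) p
  rw [hdigit, ← hnext, hS] at this
  omega

theorem carry_eq_zero (h : IsBaseRep p K m c) (hp : 0 < p) {i : ℕ} (hi : K ≤ i) :
    carry p c i = 0 := by
  rw [carry, h.sum_range_eq hi]
  exact Nat.div_eq_of_lt (h.lt_pow.trans_le (Nat.pow_le_pow_right hp hi))

theorem digit_ne_zero (h : IsBaseRep p K m c) (hp : 0 < p) {i : ℕ} (hi : carry p c i ≠ 0)
    (hi' : carry p c (i + 1) = 0) : m / p ^ i % p ≠ 0 := by
  have := h.add_carry hp i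
  rw [hi'] at this
  omega

theorem sum_digit_add_sum_carry_le (h : IsBaseRep p K m c) (hp : 2 ≤ p) :
    ∑ i ∈ range K, m / p ^ i % p + ∑ i ∈ range K, carry p c i ≤ ∑ i ∈ range K, c i := by
  have hsum := sum_congr rfl fun i (_ : i ∈ range K) => h.add_carry (by omega) i
  rw [sum_add_distrib, sum_add_distrib, ← mul_sum] at hsum
  have hshift : ∑ i ∈ range K, carry p c (i + 1) = ∑ i ∈ range K, carry p c i := by
    have h1 := sum_range_succ' (carry p c) K
    rw [sum_range_succ, h.carry_eq_zero (by omega) le_rfl, carry_zero] at h1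
    omega
  rw [hshift] at hsum
  have := Nat.mul_le_mul_right (∑ i ∈ range K, carry p c i) hp
  omega

theorem eq_of_carry_eq (h : IsBaseRep p K m c) (h' : IsBaseRep p K m c') (hp : 0 < p)
    (he : carry p c = carry p c') : c = c' := by
  funext i
  have hc := h.add_carry hp i
  have hc' := h'.add_carry hp i
  rw [← he] at hc'
  omega

end IsBaseRep

theorem card_filter_ne_zero_le_sum (s : Finset ℕ) (f : ℕ → ℕ) :
    #{i ∈ s | f i ≠ 0} ≤ ∑ i ∈ s, f i := by
  calc #{i ∈ s | f i ≠ 0} ≤ ∑ i ∈ s with f i ≠ 0, f i := by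
        simpa using card_nsmul_le_sum _ f 1 fun i hi => Nat.one_le_iff_ne_zero.2 (mem_filter.1 hi).2
    _ = ∑ i ∈ s, f i := sum_filter_ne_zero s

def repCode (p K m : ℕ) (c : ℕ → ℕ) : Finset ℕ × Finset ℕ :=
  (blockCode {i ∈ range K | m / p ^ i % p ≠ 0} (carry p c), valueCode K (carry p c))

variable {p K m n : ℕ} {c : ℕ → ℕ}

theorem IsBaseRep.blocksEndIn (h : IsBaseRep p K m c) (hp : 0 < p) :
    BlocksEndIn K {i ∈ range K | m / p ^ i % p ≠ 0} (carry p c) where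
  eq_zero _ := h.carry_eq_zero hp
  mem_of_top i hi hi' := by
    refine mem_filter.2 ⟨mem_range.2 ?_, h.digit_ne_zero hp hi hi'⟩
    by_contra hK
    exact hi (h.carry_eq_zero hp (not_lt.1 hK))

theorem repCode_injOn (hp : 0 < p) : Set.InjOn (repCode p K m) {c | IsBaseRep p K m c} := by
  intro c h c' h' hcode
  simp only [repCode, Prod.mk.injEq] at hcode
  exact h.eq_of_carry_eq h' hp ((h.blocksEndIn hp).eq_of_codes_eq (h'.blocksEndIn hp) hcode.1 hcode.2)

theorem IsBaseRep.repCode_mem (h : IsBaseRep p K m c) (hp : 2 ≤ p)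
    (hn : ∑ i ∈ range K, c i ≤ n) :
    repCode p K m c ∈ (Icc 1 n).powerset ×ˢ (Icc 1 n).powerset := by
  have hsum := h.sum_digit_add_sum_carry_le hp
  have hZ := card_filter_ne_zero_le_sum (range K) fun i => m / p ^ i % p
  have hT := card_filter_ne_zero_le_sum (range K) (carry p c)
  simp only [repCode, mem_product, mem_powerset]
  constructor
  · refine ((h.blocksEndIn (by omega)).blockCode_subset).trans (Icc_subset_Icc le_rfl ?_)
    omega
  · exact valueCode_subset.trans (Icc_subset_Icc le_rfl (by omega))

end Carry

section Solutions

def coeffs (ab : (ℕ → ℕ) × (ℕ → ℕ)) : ℕ → ℕ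
  | 0 => ab.2 0
  | i + 1 => ab.1 i + ab.2 (i + 1)

namespace SolSet

variable {p r m n K : ℕ} {ab : (ℕ → ℕ) × (ℕ → ℕ)}

theorem coeffs_eq_zero (hab : ab ∈ SolSet p r m n) {i : ℕ} (hi : r < i) : coeffs ab i = 0 := by
  obtain ⟨ha, hb, -⟩ := hab
  obtain ⟨j, rfl⟩ : ∃ j, i = j + 1 := ⟨i - 1, by omega⟩
  rw [coeffs, ha j (by omega), hb (j + 1) (by omega)]

theorem sum_coeffs_mul (hab : ab ∈ SolSet p r m n) (hK : r < K) (f : ℕ → ℕ) :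
    ∑ i ∈ range K, coeffs ab i * f i
      = ab.2 0 * f 0 + ∑ i ∈ range r, (ab.1 i + ab.2 (i + 1)) * f (i + 1) := by
  rw [← sum_subset (range_subset_range.2 hK) fun i _ hi => by
      rw [coeffs_eq_zero hab (not_lt.1 (mem_range.not.1 hi)), zero_mul],
    sum_range_succ', add_comm]
  rfl

theorem isBaseRep (hab : ab ∈ SolSet p r m n) (hp : 2 ≤ p) :
    IsBaseRep p (r + m + 1) m (coeffs ab) where
  eq_zero i hi := coeffs_eq_zero hab (by omega)
  sum_eq := by
    rw [sum_coeffs_mul hab (by omega), pow_zero, mul_one]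
    exact hab.2.2.2.2
  lt_pow := (Nat.lt_pow_self hp).trans_le (Nat.pow_le_pow_right (by omega) (by omega))

theorem sum_coeffs_le (hab : ab ∈ SolSet p r m n) (hK : r < K) :
    ∑ i ∈ range K, coeffs ab i ≤ n := by
  have h := sum_coeffs_mul hab hK fun _ => 1
  simp only [mul_one, sum_add_distrib] at h
  obtain ⟨-, hb, -, hn, -⟩ := hab
  have hbsum := sum_range_succ' ab.2 r
  rw [sum_range_succ, hb r le_rfl] at hbsum
  omega

theorem snd_eq_of_filter_eq {x y : (ℕ → ℕ) × (ℕ → ℕ)} (hx : x ∈ SolSet p r m n)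
    (hy : y ∈ SolSet p r m n) (hK : r < K)
    (h : {i ∈ range K | x.2 i = 1} = {i ∈ range K | y.2 i = 1}) : x.2 = y.2 := by
  funext i
  by_cases hi : i < K
  · have hiff : x.2 i = 1 ↔ y.2 i = 1 := by simpa [hi] using congrArg (i ∈ ·) h
    have := hx.2.2.1 i
    have := hy.2.2.1 i
    omega
  · rw [hx.2.1 i (by omega), hy.2.1 i (by omega)]

theorem eq_of_coeffs_eq {x y : (ℕ → ℕ) × (ℕ → ℕ)} (hx : x ∈ SolSet p r m n)
    (hy : y ∈ SolSet p r m n) (hc : coeffs x = coeffs y) (hb : x.2 = y.2) : x = y := by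
  refine Prod.ext (funext fun i => ?_) hb
  by_cases hi : i < r
  · have hci : x.1 i + x.2 (i + 1) = y.1 i + y.2 (i + 1) := congrFun hc (i + 1)
    have hbi := congrFun hb (i + 1)
    omega
  · rw [hx.1 i (by omega), hy.1 i (by omega)]

end SolSet

theorem filter_snd_eq_one_subset (ab : (ℕ → ℕ) × (ℕ → ℕ)) (K : ℕ) :
    {i ∈ range K | ab.2 i = 1} ⊆ {i ∈ range K | coeffs ab i ≠ 0} := by
  intro i hi
  rw [mem_filter] at hi ⊢
  refine ⟨hi.1, ?_⟩
  cases i <;> simp [coeffs, hi.2]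

-- Any `K > r` with `m < p ^ K` would do in place of `r + m + 1`.
def solCode (p r m : ℕ) (ab : (ℕ → ℕ) × (ℕ → ℕ)) : (Finset ℕ × Finset ℕ) × Finset ℕ :=
  (repCode p (r + m + 1) m (coeffs ab),
    {i ∈ range (r + m + 1) | ab.2 i = 1}.image
      (partialSum {i ∈ range (r + m + 1) | coeffs ab i ≠ 0} 1))

variable {p r m n : ℕ}

theorem solCode_injOn (hp : 2 ≤ p) : Set.InjOn (solCode p r m) (SolSet p r m n) := by
  intro x hx y hy hxy
  simp only [solCode, Prod.mk.injEq] at hxy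
  have hc : coeffs x = coeffs y :=
    repCode_injOn (by omega) (SolSet.isBaseRep hx hp) (SolSet.isBaseRep hy hp) hxy.1
  rw [hc] at hxy
  have hb : x.2 = y.2 := SolSet.snd_eq_of_filter_eq hx hy (by omega) <|
    eq_of_image_partialSum_one_eq (hc ▸ filter_snd_eq_one_subset x _)
      (filter_snd_eq_one_subset y _) hxy.2
  exact SolSet.eq_of_coeffs_eq hx hy hc hb

theorem solCode_mem (hp : 2 ≤ p) {ab : (ℕ → ℕ) × (ℕ → ℕ)} (hab : ab ∈ SolSet p r m n) :
    solCode p r m ab ∈ ((Icc 1 n).powerset ×ˢ (Icc 1 n).powerset) ×ˢ (Icc 1 n).powerset := by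
  have hsum := SolSet.sum_coeffs_le hab (K := r + m + 1) (by omega)
  refine mem_product.2 ⟨(SolSet.isBaseRep hab hp).repCode_mem hp hsum, mem_powerset.2 ?_⟩
  refine (image_partialSum_one_subset (filter_snd_eq_one_subset ab _)).trans
    (Icc_subset_Icc le_rfl ?_)
  exact (card_filter_ne_zero_le_sum _ _).trans hsum

theorem ncard_le_eight_pow (hp : 2 ≤ p) : Ncard p r m n ≤ 8 ^ n := by
  calc Ncard p r m n = (SolSet p r m n).ncard := Nat.card_coe_set_eq _
    _ ≤ (↑(((Icc 1 n).powerset ×ˢ (Icc 1 n).powerset) ×ˢ (Icc 1 n).powerset) :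
          Set ((Finset ℕ × Finset ℕ) × Finset ℕ)).ncard :=
        Set.ncard_le_ncard_of_injOn _ (fun _ hab => solCode_mem hp hab) (solCode_injOn hp)
    _ = 8 ^ n := by
        rw [Set.ncard_coe_finset]
        simp [card_product, card_powerset, ← mul_pow]

end Solutions

theorem eight_pow_le (n : ℕ) (hn : 1 ≤ n) :
    (8 : ℝ) ^ n ≤ n * 4 ^ n * Real.exp (2 * Real.pi * n / Real.sqrt 3) := by
  have hsqrt : Real.sqrt 3 < 2 := by
    rw [Real.sqrt_lt' two_pos]
    norm_num
  have hone : 1 ≤ 2 * Real.pi / Real.sqrt 3 := by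
    rw [le_div_iff₀ (Real.sqrt_pos.2 three_pos)]
    linarith [Real.pi_gt_three]
  have htwo : (2 : ℝ) ≤ Real.exp (2 * Real.pi / Real.sqrt 3) := by
    linarith [Real.add_one_le_exp (2 * Real.pi / Real.sqrt 3)]
  have hn' : (1 : ℝ) ≤ n := by exact_mod_cast hn
  rw [show 2 * Real.pi * n / Real.sqrt 3 = n * (2 * Real.pi / Real.sqrt 3) by ring,
    Real.exp_nat_mul]
  calc (8 : ℝ) ^ n = 1 * 4 ^ n * 2 ^ n := by rw [one_mul, ← mul_pow]; norm_num
    _ ≤ n * 4 ^ n * Real.exp (2 * Real.pi / Real.sqrt 3) ^ n := by gcongr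

theorem Nstab_natCast (p m n : ℕ) : Nstab p m n = Ncard p (m + 1) m n := by
  simp [Nstab]

/-- for a prime `p`, `n ≥ 1`, `m ≥ 0` and `r ≥ 1`,
`N_r(m,n) ≤ n · 4^n · e^{2πn/√3}`; in particular the stable value `N(m,n)`
satisfies the same bound. -/
theorem stmt14 (p : ℕ) (hp : p.Prime) (n : ℕ) (hn : 1 ≤ n) :
    (∀ m r : ℕ, 1 ≤ r →
      (Ncard p r m n : ℝ) ≤ n * 4 ^ n * Real.exp (2 * Real.pi * n / Real.sqrt 3)) ∧
    (∀ m : ℕ,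
      (Nstab p (m : ℤ) (n : ℤ) : ℝ) ≤ n * 4 ^ n * Real.exp (2 * Real.pi * n / Real.sqrt 3)) := by
  have hbound (m r : ℕ) :
      (Ncard p r m n : ℝ) ≤ n * 4 ^ n * Real.exp (2 * Real.pi * n / Real.sqrt 3) :=
    (eight_pow_le n hn).trans' (by exact_mod_cast ncard_le_eight_pow hp.two_le)
  refine ⟨fun m r _ => hbound m r, fun m => ?_⟩
  rw [Nstab_natCast]
  exact hbound m (m + 1)
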